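/- arXiv:2510.19298 — 6 statements merged into one kernel-verified Lean document; each statement's English description precedes it below -/
import Mathlib

section
/- The accessibility relation ⊴_a is transitive: if Z ⊴_a Z' and Z' ⊴_a Z'', then Z ⊴_a Z''. Consequently, the formula K_a φ → K_a K_a φ is valid (positive introspection). -/
namespace KOS

/-- A word over the agents: length ≥ 2 and no adjacent repetitions. -/
def IsWord {Ag : Type} (w : List Ag) : Prop := 2 ≤ w.length ∧ w.Chain' (· ≠ ·)

/-- An information perspective is a set of words over `Ag` of length ≥ 2
without adjacent repetitions. -/
def InfPersp {Ag : Type} (I : Set (List Ag)) : Prop := ∀ w ∈ I, IsWord w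

/-- The perspective shift `I[a]`. -/
def shift {Ag : Type} (I : Set (List Ag)) (a : Ag) : Set (List Ag) :=
  {w | IsWord w ∧ a :: w ∈ I} ∪ {w | w ∈ I ∧ ∃ w', w = a :: w'}

/-- `I_a`: the agents whose strategies `a` is informed about (including `a`). -/
def Ia {Ag : Type} (I : Set (List Ag)) (a : Ag) : Set Ag :=
  {b | [a, b] ∈ I} ∪ {a}

/-- A truthful information perspective: closed under suffixes. -/
def Truthful {Ag : Type} (I : Set (List Ag)) : Prop :=
  ∀ (a : Ag) (w : List Ag), IsWord w → a :: w ∈ I → w ∈ I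

/-- Concurrent game structure. -/
structure CGS (PV Ag Ac V : Type) where
  E : V → (Ag → Ac) → V
  label : V → Set PV
  simV : Ag → V → V → Prop
  simAc : Ag → Ac → Ac → Prop
  eqvV : ∀ a, Equivalence (simV a)
  eqvAc : ∀ a, Equivalence (simAc a)

/-- Histories: alternating sequences of positions and joint actions. -/
inductive Hist (Ag Ac V : Type) where
  | init : V → Hist Ag Ac V
  | step : Hist Ag Ac V → (Ag → Ac) → V → Hist Ag Ac V

namespace Hist
def last {Ag Ac V : Type} : Hist Ag Ac V → V
  | init v => v
  | step _ _ v => v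
end Hist

variable {PV Ag Ac V : Type}

/-- Validity of a history w.r.t. the transition function. -/
def CGS.Valid (G : CGS PV Ag Ac V) : Hist Ag Ac V → Prop
  | .init _ => True
  | .step ρ α v => G.Valid ρ ∧ v = G.E ρ.last α

/-- Indistinguishability of histories for agent `a` (synchronous perfect recall). -/
def CGS.simH (G : CGS PV Ag Ac V) (a : Ag) : Hist Ag Ac V → Hist Ag Ac V → Prop
  | .init v, .init v' => G.simV a v v'
  | .step ρ α v, .step ρ' α' v' =>
      G.simH a ρ ρ' ∧ (∀ b, G.simAc a (α b) (α' b)) ∧ G.simV a v v'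
  | _, _ => False

/-- A strategy maps histories to actions. -/
def Strategy (Ag Ac V : Type) := Hist Ag Ac V → Ac

/-- An assignment maps agents to strategies. -/
def Assignment (Ag Ac V : Type) := Ag → Strategy Ag Ac V

/-- A history is consistent with an assignment for a set `X` of agents. -/
def Consistent (χ : Assignment Ag Ac V) (X : Set Ag) : Hist Ag Ac V → Prop
  | .init _ => True
  | .step ρ α _ => Consistent χ X ρ ∧ ∀ b ∈ X, α b = χ b ρ

/-- Indistinguishability of assignments for agent `a` under perspective `I`. -/
def assignSim (I : Set (List Ag)) (a : Ag) (χ χ' : Assignment Ag Ac V) : Prop :=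
  ∀ b ∈ Ia I a, χ b = χ' b

/-- A state: assignment, information perspective, history. -/
structure State (Ag Ac V : Type) where
  χ : Assignment Ag Ac V
  I : Set (List Ag)
  ρ : Hist Ag Ac V

/-- `a`-consistency of a state. -/
def State.aCons (Z : State Ag Ac V) (a : Ag) : Prop := Consistent Z.χ (Ia Z.I a) Z.ρ

/-- Accessibility of states for agent `a`. -/
def CGS.Acc (G : CGS PV Ag Ac V) (a : Ag) (Z Z' : State Ag Ac V) : Prop :=
  InfPersp Z.I ∧ InfPersp Z'.I ∧ G.Valid Z.ρ ∧ G.Valid Z'.ρ ∧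
  assignSim Z.I a Z.χ Z'.χ ∧ shift Z.I a ⊆ Z'.I ∧ G.simH a Z.ρ Z'.ρ ∧
  Z.aCons a ∧ Z'.aCons a

/-- One-step continuation of a history under an assignment. -/
def CGS.nextH (G : CGS PV Ag Ac V) (χ : Assignment Ag Ac V) (ρ : Hist Ag Ac V) :
    Hist Ag Ac V :=
  .step ρ (fun b => χ b ρ) (G.E ρ.last (fun b => χ b ρ))

/-- Formulas of the language `L^C`. -/
inductive Form (PV Ag : Type) where
  | atom : PV → Form PV Ag
  | bot : Form PV Ag
  | imp : Form PV Ag → Form PV Ag → Form PV Ag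
  | know : Ag → Form PV Ag → Form PV Ag
  | common : Set Ag → Form PV Ag → Form PV Ag
  | next : Form PV Ag → Form PV Ag

def Form.neg {PV Ag : Type} (φ : Form PV Ag) : Form PV Ag := .imp φ .bot

/-- Truth of a formula at a state in a concurrent game structure. -/
def CGS.Truth (G : CGS PV Ag Ac V) : Form PV Ag → State Ag Ac V → Prop
  | .atom p, Z => p ∈ G.label Z.ρ.last
  | .bot, _ => False
  | .imp φ ψ, Z => G.Truth φ Z → G.Truth ψ Z
  | .know a φ, Z => ∀ Z', G.Acc a Z Z' → G.Truth φ Z'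
  | .common S φ, Z =>
      ∀ Z', Relation.TransGen (fun X Y => ∃ x ∈ S, G.Acc x X Y) Z Z' → G.Truth φ Z'
  | .next φ, Z => G.Truth φ ⟨Z.χ, Z.I, G.nextH Z.χ Z.ρ⟩

/-- K-depth of a formula. -/
def kd {PV Ag : Type} : Form PV Ag → ℕ
  | .atom _ => 0
  | .bot => 0
  | .imp φ ψ => max (kd φ) (kd ψ)
  | .know _ φ => kd φ + 1
  | .common _ φ => kd φ + 1
  | .next φ => kd φ

/-- `L`-formulas: no common knowledge operator. -/
def NoCommon {PV Ag : Type} : Form PV Ag → Prop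
  | .atom _ => True
  | .bot => True
  | .imp φ ψ => NoCommon φ ∧ NoCommon ψ
  | .know _ φ => NoCommon φ
  | .common _ _ => False
  | .next φ => NoCommon φ

/-- Restriction of a set of words to words of length at most `n`. -/
def restr {Ag : Type} (X : Set (List Ag)) (n : ℕ) : Set (List Ag) :=
  {w ∈ X | w.length ≤ n}

end KOS


namespace KOS
variable {PV Ag Ac V : Type}

lemma simH_trans (G : CGS PV Ag Ac V) (a : Ag) :
    ∀ ρ ρ' ρ'' : Hist Ag Ac V, G.simH a ρ ρ' → G.simH a ρ' ρ'' → G.simH a ρ ρ'' := by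
  intro ρ
  induction ρ with
  | init v =>
    intro ρ' ρ'' h1 h2
    cases ρ' with
    | init v' =>
      cases ρ'' with
      | init v'' => exact (G.eqvV a).trans h1 h2
      | step _ _ _ => exact absurd h2 (by simp [CGS.simH])
    | step _ _ _ => exact absurd h1 (by simp [CGS.simH])
  | step ρ α v ih =>
    intro ρ' ρ'' h1 h2
    cases ρ' with
    | init _ => exact absurd h1 (by simp [CGS.simH])
    | step ρ' α' v' =>
      cases ρ'' with
      | init _ => exact absurd h2 (by simp [CGS.simH])
      | step ρ'' α'' v'' =>
        obtain ⟨ha, hb, hc⟩ := h1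
        obtain ⟨ha', hb', hc'⟩ := h2
        exact ⟨ih ρ' ρ'' ha ha', fun b => (G.eqvAc a).trans (hb b) (hb' b),
          (G.eqvV a).trans hc hc'⟩

lemma shift_sub_of {I I' : Set (List Ag)} {a : Ag} (h : shift I a ⊆ I') :
    shift I a ⊆ shift I' a := by
  intro w hw
  rcases hw with ⟨hword, hmem⟩ | ⟨hmem, w', rfl⟩
  · have : a :: w ∈ shift I a := Or.inr ⟨hmem, w, rfl⟩
    exact Or.inl ⟨hword, h this⟩
  · have : a :: w' ∈ shift I a := Or.inr ⟨hmem, w', rfl⟩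
    exact Or.inr ⟨h this, w', rfl⟩

lemma Ia_sub_of {I I' : Set (List Ag)} {a : Ag} (h : shift I a ⊆ I') :
    Ia I a ⊆ Ia I' a := by
  intro b hb
  rcases hb with hb | hb
  · exact Or.inl (h (Or.inr ⟨hb, [b], rfl⟩))
  · exact Or.inr hb

end KOS

open KOS in
/-- the accessibility relation `⊴_a` is transitive, and consequently
`K_a φ → K_a K_a φ` is valid (positive introspection). -/
theorem stmt5 {PV Ag Ac V : Type} [Fintype Ag] [Fintype Ac] [Fintype V]
    (G : CGS PV Ag Ac V) (a : Ag) :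
    (∀ Z Z' Z'' : State Ag Ac V, G.Acc a Z Z' → G.Acc a Z' Z'' → G.Acc a Z Z'') ∧
    (∀ (φ : Form PV Ag) (Z : State Ag Ac V),
      G.Truth (.imp (.know a φ) (.know a (.know a φ))) Z) := by
  have htrans : ∀ Z Z' Z'' : State Ag Ac V, G.Acc a Z Z' → G.Acc a Z' Z'' → G.Acc a Z Z'' := by
    intro Z Z' Z'' h1 h2
    obtain ⟨i1, i1', v1, v1', as1, sh1, sim1, c1, c1'⟩ := h1
    obtain ⟨i2, i2', v2, v2', as2, sh2, sim2, c2, c2'⟩ := h2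
    refine ⟨i1, i2', v1, v2', ?_, fun w hw => sh2 (shift_sub_of sh1 hw),
      simH_trans G a _ _ _ sim1 sim2, c1, c2'⟩
    intro b hb
    exact (as1 b hb).trans (as2 b (Ia_sub_of sh1 hb))
  refine ⟨htrans, ?_⟩
  intro φ Z hK Z' hZZ' Z'' hZ'Z''
  exact hK Z'' (htrans Z Z' Z'' hZZ' hZ'Z'')
end

section
/- Let Z = (χ, I, ρ) be a state with truthful information perspective I in a concurrent game structure G. Then G, Z ⊨ ¬K_a ⊥ → (K_a φ → φ): if some state is a-accessible from Z, then Z is accessible from itself for a, hence knowledge is factive at Z. -/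
namespace KOS

variable {PV Ag Ac V : Type}

theorem simH_refl {PV Ag Ac V : Type} (G : CGS PV Ag Ac V) (a : Ag)
    (ρ : Hist Ag Ac V) : G.simH a ρ ρ := by
  induction ρ with
  | init v => exact (G.eqvV a).refl v
  | step ρ α v ih => exact ⟨ih, fun b => (G.eqvAc a).refl (α b), (G.eqvV a).refl v⟩

end KOS

open KOS in
/-- at a state with truthful information perspective, knowledge is
factive provided agent `a`'s knowledge is consistent: `¬K_a ⊥ → (K_a φ → φ)`. -/
theorem stmt8 {PV Ag Ac V : Type} [Fintype Ag] [Fintype Ac] [Fintype V]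
    (G : CGS PV Ag Ac V) (a : Ag) (φ : Form PV Ag) (Z : State Ag Ac V)
    (hT : Truthful Z.I) :
    G.Truth (.imp (Form.neg (.know a .bot)) (.imp (.know a φ) φ)) Z := by
  intro h1 h2
  simp only [Form.neg, CGS.Truth] at h1 h2 ⊢
  have hEx : ∃ Z', G.Acc a Z Z' := by
    by_contra h
    push_neg at h
    exact h1 (fun Z' hA => h Z' hA)
  obtain ⟨Z', hAcc⟩ := hEx
  obtain ⟨hI, _, hV, _, _, _, _, hC, _⟩ := hAcc
  exact h2 Z ⟨hI, hI, hV, hV, fun b _ => rfl,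
    fun w hw => hw.elim (fun ⟨hww, hin⟩ => hT a w hww hin) (fun h => h.1),
    simH_refl G a Z.ρ, hC, hC⟩
end

section
/- Negative introspection fails in general: there exist a concurrent game structure G, a state X, an agent b, and a formula φ such that G, X ⊨ ¬K_b φ but G, X ⊭ K_b ¬K_b φ. -/
namespace KOSex

open KOS

def myG : CGS Unit Bool Bool (Fin 3) where
  E := fun _ f => if f true then 1 else 2
  label := fun v => {u | v = 1}
  simV := fun _ => Eq
  simAc := fun _ => Eq
  eqvV := fun _ => eq_equivalence
  eqvAc := fun _ => eq_equivalence

def χα : Assignment Bool Bool (Fin 3) := fun _ _ => true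
def χβ : Assignment Bool Bool (Fin 3) := fun c _ => !c

def X0 : State Bool Bool (Fin 3) := ⟨χα, ∅, .init 0⟩
def Zβ : State Bool Bool (Fin 3) := ⟨χβ, ∅, .init 0⟩
def ZI : State Bool Bool (Fin 3) := ⟨χα, {[false, true]}, .init 0⟩

lemma acc_Xβ : myG.Acc false X0 Zβ := by
  refine ⟨?_, ?_, trivial, trivial, ?_, ?_, rfl, trivial, trivial⟩
  · intro w hw; exact absurd hw (by simp [X0])
  · intro w hw; exact absurd hw (by simp [Zβ])
  · intro c hc
    rcases hc with hc | hc
    · exact absurd hc (by simp [X0, Ia])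
    · simp only [Set.mem_singleton_iff] at hc
      subst hc; rfl
  · intro w hw
    rcases hw with ⟨_, hw⟩ | ⟨hw, _⟩ <;> exact absurd hw (by simp [X0])

lemma acc_XI : myG.Acc false X0 ZI := by
  refine ⟨?_, ?_, trivial, trivial, ?_, ?_, rfl, trivial, trivial⟩
  · intro w hw; exact absurd hw (by simp [X0])
  · intro w hw
    simp only [ZI, Set.mem_singleton_iff] at hw
    subst hw
    exact ⟨by simp, List.isChain_pair.mpr (by decide)⟩
  · intro c _; rfl
  · intro w hw
    rcases hw with ⟨_, hw⟩ | ⟨hw, _⟩ <;> exact absurd hw (by simp [X0])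

end KOSex

open KOS KOSex in
/-- negative introspection fails in general: there are a concurrent
game structure `G`, state `X`, agent `b` and formula `φ` with
`G, X ⊨ ¬K_b φ` but `G, X ⊭ K_b ¬K_b φ`. -/
theorem stmt9 : ∃ (PV Ag Ac V : Type) (G : CGS PV Ag Ac V) (X : State Ag Ac V)
    (b : Ag) (φ : Form PV Ag),
    G.Truth (Form.neg (.know b φ)) X ∧
    ¬ G.Truth (.know b (Form.neg (.know b φ))) X := by
  refine ⟨Unit, Bool, Bool, Fin 3, myG, X0, false, .next (.atom ()), ?_, ?_⟩
  · -- ¬ K_b Xp at X0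
    intro h
    have := h Zβ acc_Xβ
    -- Truth of Xp at Zβ: next position is 2, not labeled
    simp only [CGS.Truth, CGS.nextH, Hist.last, myG, Zβ, χβ] at this
    exact absurd this (by decide)
  · -- ¬ K_b ¬ K_b Xp at X0
    intro h
    apply h ZI acc_XI
    -- show K_b Xp at ZI
    rintro ⟨χ'', I'', ρ''⟩ hacc
    obtain ⟨_, _, _, _, hsim, _, hH, _, _⟩ := hacc
    have hχ : χ'' true = χα true := (hsim true (Or.inl (by simp [ZI, Ia]))).symm
    cases ρ'' with
    | init v =>
      have hv : (0 : Fin 3) = v := hH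
      subst hv
      show myG.Truth (.atom ()) _
      simp only [CGS.Truth, CGS.nextH, Hist.last, myG]
      have h1 : χ'' true (.init 0) = true := by rw [hχ]; rfl
      simp [h1]
    | step ρ α v => exact absurd hH id
end

section
/- If all states involved have the fully informed information perspective I = Ag^{≥2}, then the accessibility relation ⊴_a is symmetric: Z ⊴_a Z' implies Z' ⊴_a Z. Consequently, G, Z ⊨ φ → K_a ¬K_a ¬φ holds at every state Z with fully informed perspective. -/
namespace KOS

variable {PV Ag Ac V : Type}

lemma shift_full {Ag : Type} (a : Ag) :
    shift {w : List Ag | IsWord w} a = {w : List Ag | IsWord w} := by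
  ext w
  constructor
  · rintro (⟨hw, -⟩ | ⟨hw, -⟩) <;> exact hw
  · intro hw
    obtain ⟨hl, hc⟩ := hw
    rcases w with _ | ⟨h, t⟩
    · simp at hl
    · by_cases hha : h = a
      · exact Or.inr ⟨⟨hl, hc⟩, t, by rw [hha]⟩
      · refine Or.inl ⟨⟨hl, hc⟩, ⟨by simp, List.isChain_cons_cons.mpr ⟨fun e => hha e.symm, hc⟩⟩⟩

lemma simH_symm {PV Ag Ac V : Type} (G : CGS PV Ag Ac V) (a : Ag) :
    ∀ ρ ρ' : Hist Ag Ac V, G.simH a ρ ρ' → G.simH a ρ' ρ := by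
  intro ρ
  induction ρ with
  | init v =>
    intro ρ' h
    cases ρ' with
    | init v' => exact (G.eqvV a).symm h
    | step _ _ _ => exact h.elim
  | step ρ α v ih =>
    intro ρ' h
    cases ρ' with
    | init v' => exact h.elim
    | step ρ' α' v' =>
      obtain ⟨h1, h2, h3⟩ := h
      exact ⟨ih ρ' h1, fun b => (G.eqvAc a).symm (h2 b), (G.eqvV a).symm h3⟩

end KOS

open KOS in
/-- with fully informed information perspectives, `⊴_a` is symmetric,
and consequently `φ → K_a ¬K_a ¬φ` holds at every fully informed state. -/
theorem stmt11 {PV Ag Ac V : Type} [Fintype Ag] [Fintype Ac] [Fintype V]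
    (G : CGS PV Ag Ac V) (a : Ag) :
    (∀ Z Z' : State Ag Ac V, Z.I = {w : List Ag | IsWord w} →
      G.Acc a Z Z' → G.Acc a Z' Z) ∧
    (∀ (φ : Form PV Ag) (Z : State Ag Ac V), Z.I = {w : List Ag | IsWord w} →
      G.Truth (.imp φ (.know a (Form.neg (.know a (Form.neg φ))))) Z) := by
  have sym : ∀ Z Z' : State Ag Ac V, Z.I = {w : List Ag | IsWord w} →
      G.Acc a Z Z' → G.Acc a Z' Z := by
    intro Z Z' hI h
    obtain ⟨hP, hP', hV, hV', hA, hS, hH, hC, hC'⟩ := h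
    have hI' : Z'.I = {w : List Ag | IsWord w} := by
      apply Set.Subset.antisymm hP'
      intro w hw
      apply hS
      rw [hI, shift_full a]
      exact hw
    refine ⟨hP', hP, hV', hV, ?_, ?_, simH_symm G a _ _ hH, hC', hC⟩
    · intro b hb
      rw [hI'] at hb
      exact (hA b (by rwa [hI])).symm
    · rw [hI', shift_full, ← hI]
  refine ⟨sym, ?_⟩
  intro φ Z hI hφ Z' hZZ' hK
  exact hK Z (sym Z Z' hI hZZ') hφ
end

section
/- In the binary consensus game structure G_3, if agent a's strategy is not common knowledge in the information perspective I (i.e., there exists an alternating word w_i = ...aba or ...bab ending in 'ba' with w_i ∉ I), then G_3, (χ, I, ρ) ⊭ C_G p, where G = {a,b}, χ(a) chooses action α at v_1, and ρ = v_1 α v_2. -/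
namespace KOS
namespace Consensus

/-- The two agents of the consensus example. -/
inductive Agt | a | b
  deriving DecidableEq

instance : Fintype Agt := ⟨{Agt.a, Agt.b}, fun x => by cases x <;> decide⟩

/-- Actions: `α` (choose the minimum, leading to `v2`) and `β` (maximum, to `v3`). -/
inductive Act | α | β
  deriving DecidableEq

instance : Fintype Act := ⟨{Act.α, Act.β}, fun x => by cases x <;> decide⟩

/-- Positions of `G₃`. -/
inductive Pos | v1 | v2 | v3
  deriving DecidableEq

instance : Fintype Pos := ⟨{Pos.v1, Pos.v2, Pos.v3}, fun x => by cases x <;> decide⟩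

/-- Atomic propositions: `p` (output 0 chosen) and `q` (output 1 chosen). -/
inductive PVar | p | q
  deriving DecidableEq

instance : Fintype PVar := ⟨{PVar.p, PVar.q}, fun x => by cases x <;> decide⟩

/-- Agent `b`'s observation relation on positions: `b` cannot distinguish `v2`, `v3`. -/
def rb (x y : Pos) : Prop :=
  x = y ∨ (x = Pos.v2 ∧ y = Pos.v3) ∨ (x = Pos.v3 ∧ y = Pos.v2)

instance : DecidableRel rb := fun x y => by unfold rb; infer_instance

lemma rb_refl : ∀ x, rb x x := by decide
lemma rb_symm : ∀ x y, rb x y → rb y x := by decide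
lemma rb_trans : ∀ x y z, rb x y → rb y z → rb x z := by decide

/-- The consensus game structure `G₃`. -/
def G3 : CGS PVar Agt Act Pos where
  E := fun v jact =>
    match v, jact Agt.a with
    | Pos.v1, Act.α => Pos.v2
    | Pos.v1, Act.β => Pos.v3
    | v, _ => v
  label := fun v =>
    match v with
    | Pos.v1 => ∅
    | Pos.v2 => {PVar.p}
    | Pos.v3 => {PVar.q}
  simV := fun ag x y =>
    match ag with
    | Agt.a => x = y
    | Agt.b => rb x y
  simAc := fun ag x y =>
    match ag with
    | Agt.a => x = y
    | Agt.b => True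
  eqvV := fun ag =>
    match ag with
    | Agt.a => ⟨fun _ => rfl, Eq.symm, Eq.trans⟩
    | Agt.b => ⟨rb_refl, fun {x y} h => rb_symm x y h,
        fun {x y z} h h' => rb_trans x y z h h'⟩
  eqvAc := fun ag =>
    match ag with
    | Agt.a => ⟨fun _ => rfl, Eq.symm, Eq.trans⟩
    | Agt.b => ⟨fun _ => trivial, fun _ => trivial, fun _ _ => trivial⟩

/-- Agent `a`'s strategy is common knowledge in `I`: `wa ∈ I` for every nonempty
alternating word `w` over the agents (such that `wa` is a legal word). -/
def CKa (I : Set (List Agt)) : Prop :=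
  ∀ w : List Agt, w ≠ [] → (w ++ [Agt.a]).Chain' (· ≠ ·) → (w ++ [Agt.a]) ∈ I

/-- The history `ρ = v₁ α v₂` generated by an assignment choosing `α` at `v₁`. -/
def ρ0 (χ : Assignment Agt Act Pos) : Hist Agt Act Pos :=
  Hist.step (Hist.init Pos.v1) (fun c => χ c (Hist.init Pos.v1)) Pos.v2

lemma shift_infPersp {I : Set (List Agt)} (hI : InfPersp I) (x : Agt) :
    InfPersp (shift I x) := by
  rintro w (⟨hw, _⟩ | ⟨hw, _⟩)
  · exact hw
  · exact hI w hw

lemma valid_ρ0 {χ : Assignment Agt Act Pos}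
    (hχ : χ Agt.a (Hist.init Pos.v1) = Act.α) : G3.Valid (ρ0 χ) := by
  refine ⟨trivial, ?_⟩
  show Pos.v2 = G3.E Pos.v1 _
  simp [G3, hχ]

lemma cons_ρ0 {χ : Assignment Agt Act Pos} (S : Set Agt) :
    Consistent χ S (ρ0 χ) := ⟨trivial, fun _ _ => rfl⟩

/-- Self-accessibility with a shifted perspective. -/
lemma acc_shift {I : Set (List Agt)} (hI : InfPersp I)
    {χ : Assignment Agt Act Pos} (hχ : χ Agt.a (Hist.init Pos.v1) = Act.α)
    (x : Agt) :
    G3.Acc x ⟨χ, I, ρ0 χ⟩ ⟨χ, shift I x, ρ0 χ⟩ := by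
  refine ⟨hI, shift_infPersp hI x, valid_ρ0 hχ, valid_ρ0 hχ, fun _ _ => rfl,
    le_refl _, ?_, cons_ρ0 _, cons_ρ0 _⟩
  exact ⟨(G3.eqvV x).refl _, fun c => (G3.eqvAc x).refl _, (G3.eqvV x).refl _⟩

/-- The deviating assignment: `a` plays `β`, everyone else as in `χ`. -/
def χ' (χ : Assignment Agt Act Pos) : Assignment Agt Act Pos :=
  fun c => match c with
  | Agt.a => fun _ => Act.β
  | Agt.b => χ Agt.b

/-- The deviating history `v₁ β v₃`. -/
def ρ' (χ : Assignment Agt Act Pos) : Hist Agt Act Pos :=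
  Hist.step (Hist.init Pos.v1) (fun c => χ' χ c (Hist.init Pos.v1)) Pos.v3

/-- Base case: if `b` does not know `a`'s strategy, `b` considers the
deviating state possible. -/
lemma acc_base {I : Set (List Agt)} (hI : InfPersp I)
    {χ : Assignment Agt Act Pos} (hχ : χ Agt.a (Hist.init Pos.v1) = Act.α)
    (hba : [Agt.b, Agt.a] ∉ I) :
    G3.Acc Agt.b ⟨χ, I, ρ0 χ⟩ ⟨χ' χ, shift I Agt.b, ρ' χ⟩ := by
  refine ⟨hI, shift_infPersp hI _, valid_ρ0 hχ, ⟨trivial, rfl⟩, ?_, le_refl _,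
    ?_, cons_ρ0 _, ⟨trivial, fun _ _ => rfl⟩⟩
  · rintro c (hc | hc)
    · cases c
      · exact absurd hc hba
      · rfl
    · cases hc; rfl
  · exact ⟨Or.inl rfl, fun _ => trivial, Or.inr (Or.inl ⟨rfl, rfl⟩)⟩

open Relation in
/-- Main induction: any missing word `w ++ [a]` yields a reachable state
falsifying `p`. -/
lemma key (χ : Assignment Agt Act Pos)
    (hχ : χ Agt.a (Hist.init Pos.v1) = Act.α) :
    ∀ (w : List Agt) (I : Set (List Agt)), InfPersp I → w ≠ [] →
      ((w ++ [Agt.a]).Chain' (· ≠ ·)) → (w ++ [Agt.a]) ∉ I →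
      ∃ Z' : State Agt Act Pos,
        TransGen (fun X Y => ∃ x ∈ (Set.univ : Set Agt), G3.Acc x X Y)
          ⟨χ, I, ρ0 χ⟩ Z' ∧ PVar.p ∉ G3.label Z'.ρ.last := by
  intro w
  induction w with
  | nil => intro I _ h; exact absurd rfl h
  | cons x rest ih =>
    intro I hI _ hch hmem
    cases rest with
    | nil =>
      -- w = [x]; chain forces x ≠ a, so x = b
      have hxb : x = Agt.b := by
        cases x
        · exact absurd rfl (List.isChain_cons_cons.mp hch).1
        · rfl
      subst hxb
      refine ⟨⟨χ' χ, shift I Agt.b, ρ' χ⟩,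
        TransGen.single ⟨Agt.b, trivial, acc_base hI hχ hmem⟩, ?_⟩
      simp [G3, ρ', Hist.last]
    | cons y rest' =>
      have hxy : x ≠ y := by
        have := (List.isChain_cons_cons.mp hch).1
        exact this
      have hch' : ((y :: rest') ++ [Agt.a]).Chain' (· ≠ ·) :=
        (List.isChain_cons_cons.mp hch).2
      have hmem' : ((y :: rest') ++ [Agt.a]) ∉ shift I x := by
        rintro (⟨_, h⟩ | ⟨_, w', hw'⟩)
        · exact hmem h
        · exact hxy (List.cons_eq_cons.mp hw'.symm).1
      obtain ⟨Z', hZ', hp⟩ :=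
        ih (shift I x) (shift_infPersp hI x) (by simp) hch' hmem'
      exact ⟨Z', TransGen.head ⟨x, trivial, acc_shift hI hχ x⟩ hZ', hp⟩

end Consensus
end KOS

open KOS KOS.Consensus in
/-- in the consensus structure `G₃`, if agent `a`'s strategy is not
common knowledge in `I`, then `G₃, (χ, I, ρ) ⊭ C_G p`, where `G = {a,b}`,
`χ(a)` chooses `α` at `v₁`, and `ρ = v₁ α v₂`. -/
theorem stmt13 (I : Set (List Agt)) (hI : InfPersp I)
    (χ : Assignment Agt Act Pos)
    (hχ : χ Agt.a (Hist.init Pos.v1) = Act.α)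
    (hnCK : ¬ CKa I) :
    ¬ G3.Truth (.common Set.univ (.atom PVar.p)) ⟨χ, I, ρ0 χ⟩ := by
  intro h
  simp only [CKa, not_forall] at hnCK
  obtain ⟨w, hw, hch, hmem⟩ := hnCK
  obtain ⟨Z', hZ', hp⟩ := key χ hχ w I hI hw hch hmem
  exact hp (h Z' hZ')
end

section
/- Let I, I' be information perspectives with I restricted to words of length ≤ n+2 equal to I' restricted to words of length ≤ n+2, for some n ≥ 0. Then for any concurrent game structure G, assignment χ, history ρ, and L-formula φ (no common knowledge operator) with K-depth at most n: G, (χ, I, ρ) ⊨ φ iff G, (χ, I', ρ) ⊨ φ. -/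
namespace KOS

variable {PV Ag Ac V : Type}

section Aux
variable {PV Ag Ac V : Type}

lemma Ia_eq_of_agree {I I' : Set (List Ag)} {n : ℕ}
    (h : restr I (n + 2) = restr I' (n + 2)) (a : Ag) : Ia I a = Ia I' a := by
  have hmem : ∀ w : List Ag, w.length ≤ n + 2 → (w ∈ I ↔ w ∈ I') := by
    intro w hw
    constructor
    · intro hwI
      have : w ∈ restr I' (n + 2) := h ▸ ⟨hwI, hw⟩
      exact this.1
    · intro hwI
      have : w ∈ restr I (n + 2) := h.symm ▸ ⟨hwI, hw⟩
      exact this.1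
  ext b
  simp only [Ia, Set.mem_union, Set.mem_setOf_eq, Set.mem_singleton_iff]
  rw [hmem [a, b] (by simp)]

lemma main_dir (G : CGS PV Ag Ac V) :
    ∀ φ : Form PV Ag, NoCommon φ → ∀ n : ℕ, kd φ ≤ n →
    ∀ I I' : Set (List Ag), InfPersp I → InfPersp I' →
    restr I (n + 2) = restr I' (n + 2) →
    ∀ (χ : Assignment Ag Ac V) (ρ : Hist Ag Ac V),
    G.Truth φ ⟨χ, I, ρ⟩ → G.Truth φ ⟨χ, I', ρ⟩ := by
  intro φ
  induction φ with
  | atom p => intro _ n _ I I' _ _ _ χ ρ ht; exact ht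
  | bot => intro _ n _ I I' _ _ _ χ ρ ht; exact ht
  | imp φ ψ ihφ ihψ =>
      intro hnc n hkd I I' hI hI' h χ ρ ht hφ
      have hkdφ : kd φ ≤ n := le_trans (le_max_left _ _) hkd
      have hkdψ : kd ψ ≤ n := le_trans (le_max_right _ _) hkd
      exact ihψ hnc.2 n hkdψ I I' hI hI' h χ ρ
        (ht (ihφ hnc.1 n hkdφ I' I hI' hI h.symm χ ρ hφ))
  | common S φ ih => intro hnc; exact absurd hnc not_false
  | next φ ih =>
      intro hnc n hkd I I' hI hI' h χ ρ ht
      exact ih hnc n hkd I I' hI hI' h χ _ ht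
  | know a φ ih =>
      intro hnc n hkd I I' hI hI' h χ ρ ht
      have hmem : ∀ w : List Ag, w.length ≤ n + 2 → (w ∈ I ↔ w ∈ I') := by
        intro w hw
        constructor
        · intro hwI
          have : w ∈ restr I' (n + 2) := h ▸ ⟨hwI, hw⟩
          exact this.1
        · intro hwI
          have : w ∈ restr I (n + 2) := h.symm ▸ ⟨hwI, hw⟩
          exact this.1
      intro Z' hacc
      obtain ⟨hPI', hPI'₀, hVρ, hVρ', hσ, hsub, hsim, hc1, hc2⟩ := hacc
      set I₀ : Set (List Ag) := shift I a ∪ Z'.I with hI₀def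
      have hPI₀ : InfPersp I₀ := by
        rintro w (hw | hw)
        · rcases hw with ⟨hw, _⟩ | ⟨hw, _⟩
          · exact hw
          · exact hI w hw
        · exact hPI'₀ w hw
      have hIaeq : Ia I a = Ia I' a := Ia_eq_of_agree h a
      -- [a,b] not in the "prefix" part of shift I a
      have hnotchain : ∀ b : Ag, a :: [a, b] ∉ I := by
        intro b hcon
        have := (hI _ hcon).2
        simp [List.Chain', List.isChain_cons_cons] at this
      have hIa₀ : Ia I₀ a = Ia Z'.I a := by
        ext b
        simp only [Ia, Set.mem_union, Set.mem_setOf_eq, Set.mem_singleton_iff, hI₀def]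
        constructor
        · rintro ((hab | hab) | hb)
          · rcases hab with ⟨_, hab⟩ | ⟨hab, _⟩
            · exact absurd hab (hnotchain b)
            · have : [a, b] ∈ I' := (hmem [a, b] (by simp)).1 hab
              exact Or.inl (hsub (Or.inr ⟨this, b :: [], rfl⟩))
          · exact Or.inl hab
          · exact Or.inr hb
        · rintro (hab | hb)
          · exact Or.inl (Or.inr hab)
          · exact Or.inr hb
      have hacc₀ : G.Acc a ⟨χ, I, ρ⟩ ⟨Z'.χ, I₀, Z'.ρ⟩ := by
        refine ⟨hI, hPI₀, hVρ, hVρ', ?_, Set.subset_union_left, hsim, ?_, ?_⟩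
        · intro b hb
          exact hσ b (hIaeq ▸ hb)
        · show Consistent χ (Ia I a) ρ
          rw [hIaeq]; exact hc1
        · show Consistent Z'.χ (Ia I₀ a) Z'.ρ
          rw [hIa₀]; exact hc2
      have ht₀ : G.Truth φ ⟨Z'.χ, I₀, Z'.ρ⟩ := ht _ hacc₀
      -- now transfer from I₀ to Z'.I using the IH at depth n - 1
      have hkd' : kd φ + 1 ≤ n := hkd
      have hn1 : 1 ≤ n := by omega
      have hrestr : restr I₀ ((n - 1) + 2) = restr Z'.I ((n - 1) + 2) := by
        have hm : (n - 1) + 2 = n + 1 := by omega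
        rw [hm]
        ext w
        simp only [restr, Set.mem_setOf_eq, hI₀def, Set.mem_union, shift]
        constructor
        · rintro ⟨(⟨hword, hw⟩ | ⟨hw, w', hw'⟩) | hw, hlen⟩
          · have h1 : a :: w ∈ I' :=
              (hmem _ (by simp only [List.length_cons]; omega)).1 hw
            exact ⟨hsub (Or.inl ⟨hword, h1⟩), hlen⟩
          · have h1 : w ∈ I' := (hmem _ (by omega)).1 hw
            exact ⟨hsub (Or.inr ⟨h1, w', hw'⟩), hlen⟩
          · exact ⟨hw, hlen⟩
        · rintro ⟨hw, hlen⟩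
          exact ⟨Or.inr hw, hlen⟩
      exact ih hnc (n - 1) (by omega) I₀ Z'.I hPI₀ hPI'₀ hrestr Z'.χ Z'.ρ ht₀

end Aux

end KOS

open KOS in
/-- if `I` and `I'` agree on words of length ≤ n+2, then truth of any
common-knowledge-free formula of K-depth ≤ n is the same under `I` and `I'`. -/
theorem stmt15 {PV Ag Ac V : Type} [Fintype Ag] [Fintype Ac] [Fintype V]
    (n : ℕ) (I I' : Set (List Ag)) (hI : InfPersp I) (hI' : InfPersp I')
    (h : restr I (n + 2) = restr I' (n + 2))
    (φ : Form PV Ag) (hnc : NoCommon φ) (hkd : kd φ ≤ n)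
    (G : CGS PV Ag Ac V) (χ : Assignment Ag Ac V) (ρ : Hist Ag Ac V) :
    (G.Truth φ ⟨χ, I, ρ⟩ ↔ G.Truth φ ⟨χ, I', ρ⟩) := by
  exact ⟨main_dir G φ hnc n hkd I I' hI hI' h χ ρ,
    main_dir G φ hnc n hkd I' I hI' hI h.symm χ ρ⟩
end
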